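/- Let Q : ℝ^d → ℝ be a positive function in H¹ solving −ΔQ + ωQ = a Q^{p−1} with ω > 0, a > 0, p > 2. Let g : ℂ^N → ℝ be C¹ and homogeneous of degree p, and let w ∈ ℂ^N with |w| = 1 be a critical point of g restricted to the unit sphere with g(w) = −a. Then, with F_j = (2/p)∂_{\bar z_j} g, the vector function Φ = (w₁Q, …, w_N Q) solves the system −ΔΦ_j + ωΦ_j = −F_j(Φ) for j = 1, …, N. -/

import Mathlib

open Complex MeasureTheory

/-- The Wirtinger derivative `∂_{z̄_j} g` of a real-valued function `g : ℂ^N → ℝ`. -/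
noncomputable def wirtingerBar {N : ℕ} (g : (Fin N → ℂ) → ℝ) (z : Fin N → ℂ) (j : Fin N) : ℂ :=
  (1 / 2 : ℂ) * (((fderiv ℝ g z (Pi.single j 1) : ℝ) : ℂ)
    + Complex.I * ((fderiv ℝ g z (Pi.single j Complex.I) : ℝ) : ℂ))

/-- Laplacian of a real-valued function on `ℝ^d` as the sum of second partial
derivatives along the standard basis. -/
noncomputable def lapR {d : ℕ} (f : EuclideanSpace ℝ (Fin d) → ℝ)
    (x : EuclideanSpace ℝ (Fin d)) : ℝ :=
  ∑ i, fderiv ℝ (fun y => fderiv ℝ f y (EuclideanSpace.single i 1)) x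
    (EuclideanSpace.single i 1)

/-- Laplacian of a complex-valued function on `ℝ^d`. -/
noncomputable def lapC {d : ℕ} (f : EuclideanSpace ℝ (Fin d) → ℂ)
    (x : EuclideanSpace ℝ (Fin d)) : ℂ :=
  ∑ i, fderiv ℝ (fun y => fderiv ℝ f y (EuclideanSpace.single i 1)) x
    (EuclideanSpace.single i 1)

/-- Auxiliary: derivative of `c * ofReal (h y)`. -/
lemma const_mul_ofReal_fderiv {E : Type*} [NormedAddCommGroup E] [NormedSpace ℝ E]
    (h : E → ℝ) (c : ℂ) (x v : E) (hd : DifferentiableAt ℝ h x) :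
    fderiv ℝ (fun y => c * ((h y : ℝ) : ℂ)) x v = c * ((fderiv ℝ h x v : ℝ) : ℂ) := by
  have h1 : HasFDerivAt (fun y => c * ((h y : ℝ) : ℂ))
      (c • (Complex.ofRealCLM.comp (fderiv ℝ h x))) x :=
    (Complex.ofRealCLM.hasFDerivAt.comp x hd.hasFDerivAt).const_mul c
  rw [h1.fderiv]
  simp

/-- Auxiliary: the complex Laplacian of `c * ofReal (f y)`. -/
lemma lapC_const_mul {d : ℕ} (f : EuclideanSpace ℝ (Fin d) → ℝ) (c : ℂ)
    (hf : ContDiff ℝ 2 f) (x : EuclideanSpace ℝ (Fin d)) :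
    lapC (fun y => c * ((f y : ℝ) : ℂ)) x = c * ((lapR f x : ℝ) : ℂ) := by
  have hfd : Differentiable ℝ f := hf.differentiable (by norm_num)
  have hf1 : ContDiff ℝ 1 (fderiv ℝ f) := by
    have h2 : ContDiff ℝ ((1 : ℕ) + 1) f := by exact_mod_cast hf
    exact_mod_cast (contDiff_succ_iff_fderiv.mp h2).2.2
  have hfd2 : ∀ v, Differentiable ℝ (fun y => fderiv ℝ f y v) := by
    intro v
    exact (ContinuousLinearMap.apply ℝ ℝ v).differentiable.comp
      (hf1.differentiable one_ne_zero)
  unfold lapC lapR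
  push_cast
  rw [Finset.mul_sum]
  refine Finset.sum_congr rfl fun i _ => ?_
  have heq : (fun y => fderiv ℝ (fun z => c * ((f z : ℝ) : ℂ)) y (EuclideanSpace.single i 1))
      = fun y => c * ((fderiv ℝ f y (EuclideanSpace.single i 1) : ℝ) : ℂ) := by
    funext y
    exact const_mul_ofReal_fderiv f c y _ (hfd y)
  rw [heq, const_mul_ofReal_fderiv _ c x _ (hfd2 _ x)]

/-- Auxiliary: scaling of the real Fréchet derivative of a homogeneous function. -/
lemma fderiv_homog {N : ℕ} (p : ℝ) (g : (Fin N → ℂ) → ℝ) (hg : ContDiff ℝ 1 g)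
    (hhom : ∀ (z : Fin N → ℂ) (r : ℝ), 0 ≤ r → g (r • z) = r ^ p * g z)
    (z v : Fin N → ℂ) (r : ℝ) (hr : 0 < r) :
    fderiv ℝ g (r • z) v = r ^ (p - 1) * fderiv ℝ g z v := by
  have hgd : Differentiable ℝ g := hg.differentiable one_ne_zero
  have hsm : HasFDerivAt (fun z : Fin N → ℂ => r • z)
      (r • ContinuousLinearMap.id ℝ (Fin N → ℂ)) z :=
    (hasFDerivAt_id z).const_smul r
  have h1 : HasFDerivAt (fun z => g (r • z))
      ((fderiv ℝ g (r • z)).comp (r • ContinuousLinearMap.id ℝ (Fin N → ℂ))) z :=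
    (hgd (r • z)).hasFDerivAt.comp z hsm
  have h2 : HasFDerivAt (fun z => g (r • z)) (r ^ p • fderiv ℝ g z) z := by
    have heq : (fun z : Fin N → ℂ => g (r • z)) = fun z => r ^ p * g z := by
      funext u; exact hhom u r hr.le
    rw [heq]
    exact (hgd z).hasFDerivAt.const_smul (r ^ p)
  have h3 := h1.unique h2
  have h4 := congrFun (congrArg DFunLike.coe h3) v
  simp only [ContinuousLinearMap.comp_apply, ContinuousLinearMap.smul_apply,
    ContinuousLinearMap.coe_smul', Pi.smul_apply, ContinuousLinearMap.id_apply] at h4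
  have h5 : r * fderiv ℝ g (r • z) v = r ^ p * fderiv ℝ g z v := by
    have h6 : (fderiv ℝ g (r • z)) (r • v) = r * (fderiv ℝ g (r • z)) v := by
      simp [_root_.map_smul, smul_eq_mul]
    rw [h6] at h4
    simpa [smul_eq_mul] using h4
  have hthis : fderiv ℝ g (r • z) v = r ^ p / r * fderiv ℝ g z v := by
    field_simp at h5 ⊢
    linarith [h5]
  have h7 : r ^ (p - 1) = r ^ p / r := by rw [Real.rpow_sub hr, Real.rpow_one]
  rw [hthis, h7]

/-- if `Q > 0` is an `H¹` solution of `−ΔQ + ωQ = a Q^{p−1}` and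
`w` is a unit critical point of the degree-`p` homogeneous function `g` on the
unit sphere with `g(w) = −a`, then `Φ = w Q` solves `−ΔΦ_j + ωΦ_j = −F_j(Φ)`,
where `F_j = (2/p) ∂_{z̄_j} g`. -/
theorem scalar_type_excited_state {d N : ℕ} (ω a p : ℝ)
    (hω : 0 < ω) (ha : 0 < a) (hp : 2 < p)
    (Q : EuclideanSpace ℝ (Fin d) → ℝ)
    (hQpos : ∀ x, 0 < Q x) (hQsm : ContDiff ℝ 2 Q)
    (hQL2 : MemLp Q 2 (volume : Measure (EuclideanSpace ℝ (Fin d))))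
    (hQgradL2 : MemLp (fun x => ‖fderiv ℝ Q x‖) 2
      (volume : Measure (EuclideanSpace ℝ (Fin d))))
    (hQeq : ∀ x, -lapR Q x + ω * Q x = a * Q x ^ (p - 1))
    (g : (Fin N → ℂ) → ℝ) (hg : ContDiff ℝ 1 g)
    (hhom : ∀ (z : Fin N → ℂ) (r : ℝ), 0 ≤ r → g (r • z) = r ^ p * g z)
    (w : Fin N → ℂ) (hw : ∑ j, ‖w j‖ ^ 2 = 1)
    (hcrit : ∃ lam : ℝ, ∀ v : Fin N → ℂ,
      fderiv ℝ g w v = lam * ∑ j, ((starRingEnd ℂ) (w j) * v j).re)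
    (hgw : g w = -a)
    (F : Fin N → (Fin N → ℂ) → ℂ)
    (hF : ∀ (j : Fin N) (z : Fin N → ℂ), F j z = (2 / p : ℂ) * wirtingerBar g z j) :
    ∀ (j : Fin N) (x : EuclideanSpace ℝ (Fin d)),
      -lapC (fun y => w j * ((Q y : ℝ) : ℂ)) x + (ω : ℂ) * (w j * ((Q x : ℝ) : ℂ))
        = -F j (fun k => w k * ((Q x : ℝ) : ℂ)) := by
  obtain ⟨lam, hlam⟩ := hcrit
  have hgd : Differentiable ℝ g := hg.differentiable one_ne_zero
  -- Euler identity and the value of `lam`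
  have hlamval : lam = -(p * a) := by
    have hsmul : HasDerivAt (fun r : ℝ => r • w) w 1 := by
      simpa using (hasDerivAt_id (1 : ℝ)).smul_const w
    have hgfd : HasFDerivAt g (fderiv ℝ g w) ((1 : ℝ) • w) := by
      simpa using (hgd w).hasFDerivAt
    have hcomp : HasDerivAt (fun r : ℝ => g (r • w)) (fderiv ℝ g w w) 1 := by
      simpa [Function.comp_def] using hgfd.comp_hasDerivAt 1 hsmul
    have hrpow : HasDerivAt (fun r : ℝ => r ^ p * g w) (p * g w) 1 := by
      simpa using (Real.hasDerivAt_rpow_const (p := p) (x := (1 : ℝ))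
        (Or.inl one_ne_zero)).mul_const (g w)
    have hev : (fun r : ℝ => g (r • w)) =ᶠ[nhds 1] fun r : ℝ => r ^ p * g w := by
      filter_upwards [eventually_gt_nhds (zero_lt_one (α := ℝ))] with r hr
      exact hhom w r hr.le
    have hcomp' : HasDerivAt (fun r : ℝ => g (r • w)) (p * g w) 1 :=
      hrpow.congr_of_eventuallyEq hev
    have heuler : fderiv ℝ g w w = p * g w := hcomp.unique hcomp'
    have hsum : ∑ j, ((starRingEnd ℂ) (w j) * w j).re = 1 := by
      rw [← hw]
      refine Finset.sum_congr rfl fun j _ => ?_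
      simp [Complex.mul_re, Complex.sq_norm, Complex.normSq_apply]
    have := hlam w
    rw [heuler, hsum, hgw] at this
    linarith
  -- the Wirtinger derivative at `w`
  have hwB : ∀ j : Fin N, wirtingerBar g w j = ((lam / 2 : ℝ) : ℂ) * w j := by
    intro j
    have hsingle : ∀ c : ℂ, ∑ k, ((starRingEnd ℂ) (w k) * (Pi.single j c : Fin N → ℂ) k).re
        = ((starRingEnd ℂ) (w j) * c).re := by
      intro c
      rw [Finset.sum_eq_single j]
      · simp
      · intro k _ hk
        simp [Pi.single_eq_of_ne hk]
      · intro h; exact absurd (Finset.mem_univ j) h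
    have h1 : fderiv ℝ g w (Pi.single j 1) = lam * (w j).re := by
      rw [hlam, hsingle]; simp
    have h2 : fderiv ℝ g w (Pi.single j Complex.I) = lam * (w j).im := by
      rw [hlam, hsingle]; simp
    unfold wirtingerBar
    rw [h1, h2]
    apply Complex.ext <;> simp <;> ring
  intro j x
  set r : ℝ := Q x with hrdef
  have hr : 0 < r := hQpos x
  -- the argument of `F j` is `r • w`
  have hz : (fun k => w k * ((Q x : ℝ) : ℂ)) = r • w := by
    funext k
    simp [Pi.smul_apply, Complex.real_smul, mul_comm, hrdef]
  -- scaling of the Wirtinger derivative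
  have hwBsc : wirtingerBar g (r • w) j = ((r ^ (p - 1) : ℝ) : ℂ) * wirtingerBar g w j := by
    unfold wirtingerBar
    rw [fderiv_homog p g hg hhom w (Pi.single j 1) r hr,
      fderiv_homog p g hg hhom w (Pi.single j Complex.I) r hr]
    push_cast
    ring
  -- left-hand side
  have hL : lapC (fun y => w j * ((Q y : ℝ) : ℂ)) x = w j * ((lapR Q x : ℝ) : ℂ) :=
    lapC_const_mul Q (w j) hQsm x
  rw [hL, hz, hF, hwBsc, hwB j, hlamval]
  have hQx := hQeq x
  have hL2 : -(w j * ((lapR Q x : ℝ) : ℂ)) + (ω : ℂ) * (w j * ((Q x : ℝ) : ℂ))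
      = w j * ((a * Q x ^ (p - 1) : ℝ) : ℂ) := by
    rw [← hQx]
    push_cast
    ring
  rw [hL2]
  have hp0 : (p : ℂ) ≠ 0 := by
    exact_mod_cast ne_of_gt (lt_trans (by norm_num : (0:ℝ) < 2) hp)
  push_cast
  field_simp
  ring
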